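/- No tournament on 9 vertices with minimum in-degree at least 2 is in-quadrangular. -/
import Mathlib


open Finset

structure Tournament (V : Type) where
  beats : V → V → Bool
  asymm : ∀ u v : V, u ≠ v → beats u v = !beats v u
  irrefl : ∀ v : V, beats v v = false

def Tournament.dual {V : Type} (T : Tournament V) : Tournament V where
  beats u v := T.beats v u
  asymm u v h := T.asymm v u h.symm
  irrefl v := T.irrefl v

variable {V : Type} [Fintype V] [DecidableEq V]

def outset (T : Tournament V) (v : V) : Finset V :=
  univ.filter (fun u => T.beats v u = true)

def inset (T : Tournament V) (v : V) : Finset V :=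
  univ.filter (fun u => T.beats u v = true)

def OutQuadrangular (T : Tournament V) : Prop :=
  ∀ u v : V, u ≠ v → (outset T u ∩ outset T v).card ≠ 1

def InQuadrangular (T : Tournament V) : Prop :=
  ∀ u v : V, u ≠ v → (inset T u ∩ inset T v).card ≠ 1

def Quadrangular (T : Tournament V) : Prop :=
  OutQuadrangular T ∧ InQuadrangular T

def NearRegular (T : Tournament V) : Prop :=
  ∀ u v : V, (outset T u).card ≤ (outset T v).card + 1

def Dominating (T : Tournament V) (S : Finset V) : Prop :=
  ∀ v : V, v ∈ S ∨ ∃ u ∈ S, T.beats u v = true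

def pairOutUnion (T : Tournament V) (S : Finset V) : Finset V :=
  S.biUnion fun u => S.biUnion fun v => if u = v then ∅ else outset T u ∩ outset T v

def pairInUnion (T : Tournament V) (S : Finset V) : Finset V :=
  S.biUnion fun u => S.biUnion fun v => if u = v then ∅ else inset T u ∩ inset T v

def StronglyQuadrangular (T : Tournament V) : Prop :=
  (∀ S : Finset V, (∀ u ∈ S, ∃ v ∈ S, u ≠ v ∧ (outset T u ∩ outset T v).Nonempty) →
    S.card ≤ (pairOutUnion T S).card) ∧
  (∀ S : Finset V, (∀ u ∈ S, ∃ v ∈ S, u ≠ v ∧ (inset T u ∩ inset T v).Nonempty) →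
    S.card ≤ (pairInUnion T S).card)

section quadaux

variable (T : Tournament V)

lemma tq_ne {u v : V} (h : T.beats u v = true) : u ≠ v := by
  rintro rfl
  simp [T.irrefl] at h

lemma tq_notboth {u v : V} (h : T.beats u v = true) : T.beats v u = false := by
  rw [T.asymm v u (tq_ne T h).symm, h]
  rfl

lemma tq_total {u v : V} (hne : u ≠ v) (h : T.beats u v = false) :
    T.beats v u = true := by
  rw [T.asymm v u hne.symm, h]
  rfl

lemma mem_inset' {u v : V} : u ∈ inset T v ↔ T.beats u v = true := by
  simp only [inset, Finset.mem_filter, Finset.mem_univ, true_and]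

lemma mem_outset' {u v : V} : u ∈ outset T v ↔ T.beats v u = true := by
  simp only [outset, Finset.mem_filter, Finset.mem_univ, true_and]

def indeg (S : Finset V) (u : V) : ℕ :=
  (S.filter (fun w => T.beats w u = true)).card

lemma indeg_le {S : Finset V} {u : V} (hu : u ∈ S) : indeg T S u ≤ S.card - 1 := by
  have h : S.filter (fun w => T.beats w u = true) ⊆ S.erase u := by
    intro w hw
    rw [Finset.mem_filter] at hw
    exact Finset.mem_erase.2 ⟨tq_ne T hw.2, hw.1⟩
  calc indeg T S u ≤ (S.erase u).card := Finset.card_le_card h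
    _ = S.card - 1 := Finset.card_erase_of_mem hu

lemma indeg_zero {S : Finset V} {u : V} (h : indeg T S u = 0) :
    ∀ w ∈ S, T.beats w u = false := by
  intro w hw
  cases hb : T.beats w u
  · rfl
  · exfalso
    have hmem : w ∈ S.filter (fun w => T.beats w u = true) :=
      Finset.mem_filter.2 ⟨hw, hb⟩
    simp only [indeg, Finset.card_eq_zero] at h
    rw [h] at hmem
    exact Finset.notMem_empty w hmem

lemma indeg_max {S : Finset V} {u : V} (hu : u ∈ S) (h : indeg T S u = S.card - 1) :
    ∀ w ∈ S, w ≠ u → T.beats w u = true := by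
  have hsub : S.filter (fun w => T.beats w u = true) ⊆ S.erase u := by
    intro w hw
    rw [Finset.mem_filter] at hw
    exact Finset.mem_erase.2 ⟨tq_ne T hw.2, hw.1⟩
  have heq : S.filter (fun w => T.beats w u = true) = S.erase u := by
    apply Finset.eq_of_subset_of_card_le hsub
    rw [Finset.card_erase_of_mem hu]
    exact le_of_eq h.symm
  intro w hw hne
  have : w ∈ S.filter (fun w => T.beats w u = true) := by
    rw [heq]; exact Finset.mem_erase.2 ⟨hne, hw⟩
  exact (Finset.mem_filter.1 this).2

lemma beats_add {u w : V} :
    ((if T.beats w u = true then 1 else 0) + (if T.beats u w = true then 1 else 0) : ℕ)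
      = if w = u then 0 else 1 := by
  by_cases hw : w = u
  · subst hw; simp [T.irrefl]
  · cases hb : T.beats w u
    · simp [hb, tq_total T hw hb, hw]
    · simp [hb, tq_notboth T hb, hw]

lemma sum_indeg (S : Finset V) :
    2 * ∑ u ∈ S, indeg T S u = S.card * (S.card - 1) := by
  have hcf : ∀ u ∈ S, indeg T S u = ∑ w ∈ S, (if T.beats w u = true then 1 else 0) := by
    intro u _
    exact Finset.card_filter _ _
  have key : ∀ u ∈ S,
      (∑ w ∈ S, ((if T.beats w u = true then 1 else 0)
        + (if T.beats u w = true then 1 else 0))) = S.card - 1 := by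
    intro u hu
    have h : (if u = u then (0:ℕ) else 1) + ∑ w ∈ S.erase u, (if w = u then (0:ℕ) else 1)
        = ∑ w ∈ S, (if w = u then 0 else 1) :=
      Finset.add_sum_erase S (fun w => if w = u then 0 else 1) hu
    rw [if_pos rfl, zero_add] at h
    have h2 : ∑ w ∈ S.erase u, (if w = u then (0:ℕ) else 1) = S.card - 1 := by
      rw [Finset.sum_congr rfl (fun w hw => if_neg (Finset.ne_of_mem_erase hw)),
        Finset.sum_const, smul_eq_mul, mul_one]
      exact Finset.card_erase_of_mem hu
    rw [Finset.sum_congr rfl (fun w _ => beats_add T), ← h, h2]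
  calc 2 * ∑ u ∈ S, indeg T S u
      = ∑ u ∈ S, (∑ w ∈ S, (if T.beats w u = true then 1 else 0))
        + ∑ u ∈ S, (∑ w ∈ S, (if T.beats u w = true then 1 else 0)) := by
        rw [two_mul, Finset.sum_congr rfl hcf]
        congr 1
        exact Finset.sum_comm
    _ = ∑ u ∈ S, ((∑ w ∈ S, (if T.beats w u = true then 1 else 0))
        + (∑ w ∈ S, (if T.beats u w = true then 1 else 0))) :=
        (Finset.sum_add_distrib).symm
    _ = ∑ u ∈ S, (∑ w ∈ S, ((if T.beats w u = true then 1 else 0)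
        + (if T.beats u w = true then 1 else 0))) :=
        Finset.sum_congr rfl (fun u _ => (Finset.sum_add_distrib).symm)
    _ = ∑ u ∈ S, (S.card - 1) := Finset.sum_congr rfl key
    _ = S.card * (S.card - 1) := by rw [Finset.sum_const, smul_eq_mul]

lemma indeg_ne_one (hq : InQuadrangular T) {v u : V} (hne : v ≠ u) :
    indeg T (inset T v) u ≠ 1 := by
  have hset : (inset T v).filter (fun w => T.beats w u = true)
      = inset T v ∩ inset T u := by
    ext w
    simp only [Finset.mem_filter, Finset.mem_inter, mem_inset']
  simp only [indeg, hset]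
  exact hq v u hne

lemma inout_disj (v : V) : Disjoint (inset T v) (outset T v) := by
  rw [Finset.disjoint_left]
  intro w hw hw2
  have h1 := (mem_inset' T).1 hw
  have h2 := (mem_outset' T).1 hw2
  have h3 := tq_notboth T h1
  rw [h2] at h3
  exact Bool.noConfusion h3

lemma inout_union (v : V) : inset T v ∪ outset T v = Finset.univ.erase v := by
  ext w
  simp only [Finset.mem_union, Finset.mem_erase, Finset.mem_univ, and_true]
  rw [mem_inset', mem_outset']
  constructor
  · rintro (h | h)
    · exact tq_ne T h
    · exact (tq_ne T h).symm
  · intro hne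
    cases h : T.beats w v
    · exact Or.inr (tq_total T hne h)
    · exact Or.inl rfl

lemma in_add_out (v : V) :
    (inset T v).card + (outset T v).card = Fintype.card V - 1 := by
  rw [← Finset.card_union_of_disjoint (inout_disj T v), inout_union T v,
    Finset.card_erase_of_mem (Finset.mem_univ v), Finset.card_univ]

lemma sum_inset_eq_sum_outset :
    ∑ v : V, (inset T v).card = ∑ v : V, (outset T v).card := by
  simp only [inset, outset, Finset.card_filter]
  exact Finset.sum_comm

end quadaux
theorem stmt_9 (T : Tournament V) (hcard : Fintype.card V = 9)
    (hmin : ∀ v : V, 2 ≤ (inset T v).card) :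
    ¬ InQuadrangular T := by
  intro hq
  -- every in-degree is at least 4
  have hge : ∀ v : V, 4 ≤ (inset T v).card := by
    intro v
    by_contra hlt
    push_neg at hlt
    have hm := hmin v
    have heach : ∀ u ∈ inset T v,
        indeg T (inset T v) u = 0 ∨ indeg T (inset T v) u = 2 := by
      intro u hu
      have h1 := indeg_le T hu
      have h2 := indeg_ne_one T hq (tq_ne T ((mem_inset' T).1 hu)).symm
      omega
    have hdvd : 2 ∣ ∑ u ∈ inset T v, indeg T (inset T v) u :=
      Finset.dvd_sum (fun u hu => by rcases heach u hu with h | h <;> simp [h])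
    have hs := sum_indeg T (inset T v)
    rcases (by omega : (inset T v).card = 2 ∨ (inset T v).card = 3) with h | h <;>
      rw [h] at hs <;> omega
  -- total sum of in-degrees is 36
  have htot : ∑ v : V, (inset T v).card = 36 := by
    have h1 := sum_inset_eq_sum_outset T
    have h2 : ∑ v : V, ((inset T v).card + (outset T v).card) = 72 := by
      have h3 : ∑ v : V, ((inset T v).card + (outset T v).card) = ∑ _v : V, 8 :=
        Finset.sum_congr rfl (fun v _ => by have h4 := in_add_out T v; rw [hcard] at h4; omega)
      rw [h3, Finset.sum_const, Finset.card_univ, hcard, smul_eq_mul]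
    rw [Finset.sum_add_distrib, ← h1] at h2
    omega
  -- hence every in-degree is exactly 4
  have hall4 : ∀ v : V, (inset T v).card = 4 := by
    intro v
    by_contra hv
    have h5 : 5 ≤ (inset T v).card := by have := hge v; omega
    have hce : (Finset.univ.erase v).card = 8 := by
      rw [Finset.card_erase_of_mem (Finset.mem_univ v), Finset.card_univ, hcard]
    have hbig : (Finset.univ.erase v).card * 4
        ≤ ∑ w ∈ Finset.univ.erase v, (inset T w).card := by
      rw [← smul_eq_mul]
      exact Finset.card_nsmul_le_sum _ _ 4
        (fun w _ => hge w)
    have hsplit : (inset T v).card + ∑ w ∈ Finset.univ.erase v, (inset T w).card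
        = ∑ w : V, (inset T w).card :=
      Finset.add_sum_erase Finset.univ (fun w => (inset T w).card) (Finset.mem_univ v)
    rw [hce] at hbig
    omega
  have houtcard : ∀ w : V, (outset T w).card = 4 := by
    intro w
    have h1 := in_add_out T w
    have h2 := hall4 w
    rw [hcard] at h1
    omega
  -- in any in-set, no member has in-degree 3 within it
  have hno3 : ∀ a : V, ∀ u ∈ inset T a, indeg T (inset T a) u ≠ 3 := by
    intro a u hu h3
    have h4 := hall4 a
    have hmax : ∀ w ∈ inset T a, w ≠ u → T.beats w u = true :=
      indeg_max T hu (by omega)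
    have hsum := sum_indeg T (inset T a)
    rw [h4] at hsum
    have hsplit : indeg T (inset T a) u + ∑ w ∈ (inset T a).erase u, indeg T (inset T a) w
        = ∑ w ∈ inset T a, indeg T (inset T a) w :=
      Finset.add_sum_erase _ (fun w => indeg T (inset T a) w) hu
    have heach : ∀ w ∈ (inset T a).erase u,
        indeg T (inset T a) w = 0 ∨ indeg T (inset T a) w = 2 := by
      intro w hw
      have hwS := Finset.mem_of_mem_erase hw
      have hwu := Finset.ne_of_mem_erase hw
      have h1 := indeg_le T hwS
      have hne1 := indeg_ne_one T hq (tq_ne T ((mem_inset' T).1 hwS)).symm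
      have hne3 : indeg T (inset T a) w ≠ 3 := by
        intro h3'
        have hmax' := indeg_max T hwS (show indeg T (inset T a) w = (inset T a).card - 1 by omega)
        have h6 := hmax w hwS hwu
        have h7 := tq_notboth T h6
        rw [hmax' u hu (Ne.symm hwu)] at h7
        exact Bool.noConfusion h7
      omega
    have hdvd : 2 ∣ ∑ w ∈ (inset T a).erase u, indeg T (inset T a) w :=
      Finset.dvd_sum (fun w hw => by rcases heach w hw with h | h <;> simp [h])
    omega
  -- in any in-set there is a dominant vertex (in-degree 0 within it)
  have hdom : ∀ v : V, ∃ a ∈ inset T v, indeg T (inset T v) a = 0 := by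
    intro v
    by_contra hno
    push_neg at hno
    have hsum := sum_indeg T (inset T v)
    rw [hall4 v] at hsum
    have h2 : ∀ u ∈ inset T v, 2 ≤ indeg T (inset T v) u := by
      intro u hu
      have ha := hno u hu
      have hb := indeg_ne_one T hq (tq_ne T ((mem_inset' T).1 hu)).symm
      omega
    have h8 : (inset T v).card • 2 ≤ ∑ u ∈ inset T v, indeg T (inset T v) u :=
      Finset.card_nsmul_le_sum _ _ 2 h2
    rw [hall4 v, smul_eq_mul] at h8
    omega
  -- pick any vertex v
  obtain ⟨v, -⟩ := Finset.card_pos.mp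
    (show 0 < (Finset.univ : Finset V).card by rw [Finset.card_univ, hcard]; omega)
  -- total indeg over the whole vertex set
  have hsumU : ∑ u : V, indeg T (inset T v) u = 16 := by
    have hstep : ∀ w ∈ inset T v,
        (∑ u : V, if T.beats w u = true then 1 else 0) = 4 := by
      intro w _
      have h := houtcard w
      simp only [outset, Finset.card_filter] at h
      exact h
    calc ∑ u : V, indeg T (inset T v) u
        = ∑ u : V, ∑ w ∈ inset T v, (if T.beats w u = true then 1 else 0) :=
          Finset.sum_congr rfl (fun u _ => Finset.card_filter _ _)
      _ = ∑ w ∈ inset T v, ∑ u : V, (if T.beats w u = true then 1 else 0) :=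
          Finset.sum_comm
      _ = ∑ w ∈ inset T v, 4 := Finset.sum_congr rfl hstep
      _ = 16 := by rw [Finset.sum_const, hall4 v]; norm_num
  have hvindeg : indeg T (inset T v) v = 4 := by
    have hfe : (inset T v).filter (fun w => T.beats w v = true) = inset T v :=
      Finset.filter_true_of_mem (fun w hw => (mem_inset' T).1 hw)
    simp only [indeg, hfe, hall4 v]
  have hS6 : ∑ w ∈ inset T v, indeg T (inset T v) w = 6 := by
    have := sum_indeg T (inset T v)
    rw [hall4 v] at this
    omega
  have hunion : ∑ w ∈ Finset.univ.erase v, indeg T (inset T v) w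
      = ∑ w ∈ inset T v, indeg T (inset T v) w
        + ∑ w ∈ outset T v, indeg T (inset T v) w := by
    rw [← inout_union T v, Finset.sum_union (inout_disj T v)]
  have hsplitU : indeg T (inset T v) v + ∑ w ∈ Finset.univ.erase v, indeg T (inset T v) w
      = ∑ w : V, indeg T (inset T v) w :=
    Finset.add_sum_erase Finset.univ (fun w => indeg T (inset T v) w) (Finset.mem_univ v)
  have hOsum : ∑ w ∈ outset T v, indeg T (inset T v) w = 6 := by omega
  -- find u in O(v) beaten by nobody in I(v)
  have hexu : ∃ u ∈ outset T v, indeg T (inset T v) u = 0 := by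
    by_contra hno
    push_neg at hno
    have h2 : ∀ u ∈ outset T v, 2 ≤ indeg T (inset T v) u := by
      intro u hu
      have ha := hno u hu
      have hb := indeg_ne_one T hq (tq_ne T ((mem_outset' T).1 hu))
      omega
    have h8 : (outset T v).card • 2 ≤ ∑ u ∈ outset T v, indeg T (inset T v) u :=
      Finset.card_nsmul_le_sum _ _ 2 h2
    rw [houtcard v, smul_eq_mul] at h8
    omega
  obtain ⟨u, huO, hu0⟩ := hexu
  have hvu : T.beats v u = true := (mem_outset' T).1 huO
  -- I(u) = {v} ∪ O(v) \ {u}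
  have hsub : inset T u ⊆ insert v ((outset T v).erase u) := by
    intro x hx
    have hxu : T.beats x u = true := (mem_inset' T).1 hx
    by_cases hxv : x = v
    · subst hxv; exact Finset.mem_insert_self _ _
    · have hxS : x ∉ inset T v := by
        intro hxS
        have h := indeg_zero T hu0 x hxS
        rw [hxu] at h
        exact Bool.noConfusion h
      have hxvb : T.beats x v = false := by
        cases h : T.beats x v
        · rfl
        · exact absurd ((mem_inset' T).2 h) hxS
      have hxO : x ∈ outset T v := (mem_outset' T).2 (tq_total T hxv hxvb)
      exact Finset.mem_insert_of_mem (Finset.mem_erase.2 ⟨tq_ne T hxu, hxO⟩)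
  have hvnotO : v ∉ (outset T v).erase u := by
    intro h
    have := (mem_outset' T).1 (Finset.mem_of_mem_erase h)
    rw [T.irrefl v] at this
    exact Bool.noConfusion this
  have hcard4 : (insert v ((outset T v).erase u)).card = 4 := by
    rw [Finset.card_insert_of_notMem hvnotO, Finset.card_erase_of_mem huO, houtcard v]
  have hinsu : inset T u = insert v ((outset T v).erase u) :=
    Finset.eq_of_subset_of_card_le hsub (by rw [hcard4, hall4 u])
  have hbeatsu : ∀ x ∈ outset T v, x ≠ u → T.beats x u = true := by
    intro x hx hxu
    have : x ∈ inset T u := by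
      rw [hinsu]
      exact Finset.mem_insert_of_mem (Finset.mem_erase.2 ⟨hxu, hx⟩)
    exact (mem_inset' T).1 this
  -- dominant vertex a of I(v)
  obtain ⟨a, haS, ha0⟩ := hdom v
  have hav : T.beats a v = true := (mem_inset' T).1 haS
  have habeats : ∀ w ∈ inset T v, w ≠ a → T.beats a w = true := by
    intro w hw hwa
    exact tq_total T hwa (indeg_zero T ha0 w hw)
  -- I(a) = O(v)
  have hOsub : outset T v ⊆ inset T a := by
    intro x hx
    have hvx := (mem_outset' T).1 hx
    by_contra hxa
    have hxane : x ≠ a := by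
      rintro rfl
      have h := tq_notboth T hav
      rw [hvx] at h
      exact Bool.noConfusion h
    have hxab : T.beats x a = false := by
      cases h : T.beats x a
      · rfl
      · exact absurd ((mem_inset' T).2 h) hxa
    have hax : T.beats a x = true := tq_total T hxane hxab
    have hxv : x ≠ v := (tq_ne T hvx).symm
    have hxS : x ∉ inset T v := by
      intro hxS
      have h := tq_notboth T hvx
      rw [(mem_inset' T).1 hxS] at h
      exact Bool.noConfusion h
    have hvnotin : v ∉ (inset T v).erase a := by
      intro hv'
      have h := (mem_inset' T).1 (Finset.mem_of_mem_erase hv')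
      rw [T.irrefl v] at h
      exact Bool.noConfusion h
    have hxnotin : x ∉ insert v ((inset T v).erase a) := by
      intro hx'
      rcases Finset.mem_insert.1 hx' with rfl | hx'
      · exact hxv rfl
      · exact hxS (Finset.mem_of_mem_erase hx')
    have hbig : insert x (insert v ((inset T v).erase a)) ⊆ outset T a := by
      intro y hy
      rcases Finset.mem_insert.1 hy with rfl | hy
      · exact (mem_outset' T).2 hax
      rcases Finset.mem_insert.1 hy with rfl | hy
      · exact (mem_outset' T).2 hav
      · exact (mem_outset' T).2
          (habeats y (Finset.mem_of_mem_erase hy) (Finset.ne_of_mem_erase hy))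
    have hc : (insert x (insert v ((inset T v).erase a))).card = 5 := by
      rw [Finset.card_insert_of_notMem hxnotin, Finset.card_insert_of_notMem hvnotin,
        Finset.card_erase_of_mem haS, hall4 v]
    have hle := Finset.card_le_card hbig
    rw [hc, houtcard a] at hle
    omega
  have hIa : inset T a = outset T v :=
    (Finset.eq_of_subset_of_card_le hOsub (by rw [hall4 a, houtcard v])).symm
  -- final contradiction: u has in-degree 3 within I(a)
  have huIa : u ∈ inset T a := by rw [hIa]; exact huO
  have hfin : indeg T (inset T a) u = 3 := by
    have hfe : (inset T a).filter (fun w => T.beats w u = true) = (outset T v).erase u := by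
      rw [hIa]
      ext w
      simp only [Finset.mem_filter, Finset.mem_erase]
      constructor
      · rintro ⟨hw, hb⟩
        exact ⟨tq_ne T hb, hw⟩
      · rintro ⟨hne, hw⟩
        exact ⟨hw, hbeatsu w hw hne⟩
    simp only [indeg, hfe]
    rw [Finset.card_erase_of_mem huO, houtcard v]
  exact hno3 a u huIa hfin
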